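/- Let F ∈ ℤ[x,y] be a polynomial of total degree 6 such that its degree-6 homogeneous component is F₆(x,y) = a₆·x⁶ with a₆ ≠ 0, its degree-5 homogeneous component F₅ is divisible by x⁴, and its degree-4 homogeneous component F₄ is divisible by x but not by x². Then F is not arithmetically complete. -/

import Mathlib

open MvPolynomial

/-- `F ∈ ℤ[x,y]` is arithmetically complete if there exist integers `D₁ > 0` and `D₂`
such that `F(ℤ²) = {D₁ * n + D₂ : n ∈ ℤ, n ≥ 0}`. -/
def ArithmeticallyComplete (F : MvPolynomial (Fin 2) ℤ) : Prop :=
  ∃ D₁ D₂ : ℤ, 0 < D₁ ∧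
    {m : ℤ | ∃ x y : ℤ, eval ![x, y] F = m}
      = {m : ℤ | ∃ n : ℤ, 0 ≤ n ∧ m = D₁ * n + D₂}

section AuxPoly

open Polynomial Filter

lemma aux_eval_lt_of_lc_neg (p : Polynomial ℤ) (hd : 0 < p.degree) (hlc : p.leadingCoeff < 0)
    (B : ℤ) : ∃ y : ℤ, p.eval y < B := by
  set q : Polynomial ℝ := p.map (Int.castRingHom ℝ) with hq
  have hinj : Function.Injective (Int.castRingHom ℝ) := Int.cast_injective
  have hqd : 0 < q.degree := by rwa [hq, Polynomial.degree_map_eq_of_injective hinj]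
  have hqlc : q.leadingCoeff ≤ 0 := by
    rw [hq, Polynomial.leadingCoeff_map_of_injective hinj]
    simp only [eq_intCast]; exact_mod_cast hlc.le
  have h1 : Tendsto (fun x : ℝ => q.eval x) atTop atBot :=
    Polynomial.tendsto_atBot_of_leadingCoeff_nonpos q hqd hqlc
  have h2 : Tendsto (fun n : ℤ => q.eval (n : ℝ)) atTop atBot :=
    h1.comp tendsto_intCast_atTop_atTop
  obtain ⟨n, hn⟩ := (h2.eventually (eventually_lt_atBot (B : ℝ))).exists
  refine ⟨n, ?_⟩
  rw [hq, Polynomial.eval_intCast_map (Int.castRingHom ℝ) p n] at hn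
  rw [eq_intCast] at hn; exact_mod_cast hn

lemma aux_eval_lt (p : Polynomial ℤ) (h3 : p.natDegree = 3) (B : ℤ) :
    ∃ y : ℤ, p.eval y < B := by
  have hp0 : p ≠ 0 := fun h => by simp [h] at h3
  have hdpos : 0 < p.degree := by
    rw [Polynomial.degree_eq_natDegree hp0, h3]
    exact_mod_cast Nat.zero_lt_succ _
  have hlc : p.leadingCoeff ≠ 0 := Polynomial.leadingCoeff_ne_zero.mpr hp0
  rcases hlc.lt_or_gt with h | h
  · exact aux_eval_lt_of_lc_neg p hdpos h B
  · set r := p.comp (-Polynomial.X : Polynomial ℤ) with hr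
    have hnX : (-Polynomial.X : Polynomial ℤ).natDegree = 1 := by simp
    have hrdeg : r.natDegree = 3 := by
      rw [hr, Polynomial.natDegree_comp, hnX, h3, mul_one]
    have hr0 : r ≠ 0 := fun hh => by simp [hh] at hrdeg
    have hrd : 0 < r.degree := by
      rw [Polynomial.degree_eq_natDegree hr0, hrdeg]
      exact_mod_cast Nat.zero_lt_succ _
    have hrlc : r.leadingCoeff < 0 := by
      rw [hr, Polynomial.leadingCoeff_comp (by rw [hnX]; exact one_ne_zero), h3]
      have h1 : (-Polynomial.X : Polynomial ℤ).leadingCoeff = -1 := by simp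
      rw [h1]
      nlinarith
    obtain ⟨y, hy⟩ := aux_eval_lt_of_lc_neg r hrd hrlc B
    exact ⟨-y, by simpa [hr, Polynomial.eval_comp] using hy⟩

end AuxPoly

lemma deg2 (d : Fin 2 →₀ ℕ) : d.degree = d 0 + d 1 := by
  rw [Finsupp.degree, ← Fin.sum_univ_two (f := fun i => d i)]
  exact Finset.sum_subset (Finset.subset_univ _)
    (fun x _ hx => Finsupp.notMem_support_iff.mp hx)

lemma coeff_X_pow_mul_eq_zero : ∀ (k : ℕ) (H : MvPolynomial (Fin 2) ℤ) (d : Fin 2 →₀ ℕ),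
    d 0 < k → coeff d (X 0 ^ k * H) = 0 := by
  intro k
  induction k with
  | zero => intro H d h; omega
  | succ k ih =>
    intro H d h
    have : (X 0 : MvPolynomial (Fin 2) ℤ) ^ (k + 1) * H = (X 0 ^ k * H) * X 0 := by ring
    rw [this, coeff_mul_X']
    split_ifs with h0
    · apply ih
      have h1 : d 0 ≠ 0 := Finsupp.mem_support_iff.mp h0
      simp only [Finsupp.coe_tsub, Pi.sub_apply, Finsupp.single_eq_same]
      omega
    · rfl

lemma X_dvd_of_support (H : MvPolynomial (Fin 2) ℤ) (h : ∀ d ∈ H.support, d 0 ≠ 0) :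
    (X 0 : MvPolynomial (Fin 2) ℤ) ∣ H := by
  rw [H.as_sum]
  apply Finset.dvd_sum
  intro d hd
  rw [X_dvd_monomial]
  exact Or.inr (h d hd)

lemma finsupp_fin2_eq (d : Fin 2 →₀ ℕ) :
    d = Finsupp.single 0 (d 0) + Finsupp.single 1 (d 1) := by
  ext i
  fin_cases i <;> simp [Finsupp.single_apply]

/-- If `F ∈ ℤ[x,y]` has degree 6 with leading form `F₆ = a₆ x⁶` (`a₆ ≠ 0`), with
`x⁴ ∣ F₅`, and with `x ∣ F₄` but `x² ∤ F₄`, then `F` is not arithmetically complete. -/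
theorem degenerate_case_not_arithmetically_complete
    (F : MvPolynomial (Fin 2) ℤ) (hdeg : F.totalDegree = 6)
    (a₆ : ℤ) (ha₆ : a₆ ≠ 0)
    (h6 : homogeneousComponent 6 F = C a₆ * X 0 ^ 6)
    (h5 : (X 0 : MvPolynomial (Fin 2) ℤ) ^ 4 ∣ homogeneousComponent 5 F)
    (h4 : (X 0 : MvPolynomial (Fin 2) ℤ) ∣ homogeneousComponent 4 F)
    (h4' : ¬ (X 0 : MvPolynomial (Fin 2) ℤ) ^ 2 ∣ homogeneousComponent 4 F) :
    ¬ ArithmeticallyComplete F := by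
  rintro ⟨D₁, D₂, hD₁, hset⟩
  obtain ⟨H4, hH4⟩ := h4
  obtain ⟨H5, hH5⟩ := h5
  -- the key support restriction
  have hkey : ∀ d : Fin 2 →₀ ℕ, d ∈ F.support → d 1 ≤ 3 ∧ (d 1 = 3 → d 0 ≤ 1) := by
    intro d hd
    have hco : F.coeff d ≠ 0 := mem_support_iff.mp hd
    have hsum : d 0 + d 1 ≤ 6 := by
      have h := MvPolynomial.le_totalDegree hd
      rw [hdeg] at h
      calc d 0 + d 1 = d.degree := (deg2 d).symm
        _ ≤ 6 := h
    by_contra hbad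
    push_neg at hbad
    have hbad' : 4 ≤ d 1 ∨ (d 1 = 3 ∧ 2 ≤ d 0) := by omega
    have hd13 : 3 ≤ d 1 := by omega
    have hj : d 0 + d 1 = 4 ∨ d 0 + d 1 = 5 ∨ d 0 + d 1 = 6 := by omega
    rcases hj with hj | hj | hj
    · -- degree 4 : d 0 = 0, contradiction with X ∣ F₄
      have hd0 : d 0 < 1 := by omega
      have h1 : coeff d (homogeneousComponent 4 F) = F.coeff d := by
        rw [coeff_homogeneousComponent, if_pos (by rw [deg2]; omega)]
      rw [hH4] at h1
      have h2 : coeff d ((X 0 : MvPolynomial (Fin 2) ℤ) * H4) = 0 := by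
        have := coeff_X_pow_mul_eq_zero 1 H4 d hd0
        simpa using this
      exact hco (h2 ▸ h1.symm)
    · -- degree 5 : d 0 ≤ 2 < 4, contradiction with X⁴ ∣ F₅
      have hd0 : d 0 < 4 := by omega
      have h1 : coeff d (homogeneousComponent 5 F) = F.coeff d := by
        rw [coeff_homogeneousComponent, if_pos (by rw [deg2]; omega)]
      rw [hH5] at h1
      have h2 := coeff_X_pow_mul_eq_zero 4 H5 d hd0
      exact hco (h2 ▸ h1.symm)
    · -- degree 6 : F₆ = a₆ x⁶
      have h1 : coeff d (homogeneousComponent 6 F) = F.coeff d := by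
        rw [coeff_homogeneousComponent, if_pos (by rw [deg2]; omega)]
      rw [h6] at h1
      have hne : Finsupp.single (0 : Fin 2) 6 ≠ d := by
        intro hh
        have := congrArg (fun f : Fin 2 →₀ ℕ => f 1) hh
        simp [Finsupp.single_apply] at this
        omega
      rw [coeff_C_mul, MvPolynomial.coeff_X_pow, if_neg hne, mul_zero] at h1
      exact hco h1.symm
  -- the coefficient of x y³ is nonzero
  have hXH : ¬ (X 0 : MvPolynomial (Fin 2) ℤ) ∣ H4 := by
    rintro ⟨K, hK⟩
    exact h4' ⟨K, by rw [hH4, hK]; ring⟩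
  obtain ⟨e, hesup, he0⟩ : ∃ e ∈ H4.support, e 0 = 0 := by
    by_contra hall
    push_neg at hall
    exact hXH (X_dvd_of_support H4 fun d hd => hall d hd)
  have hc4 : coeff (Finsupp.single (0 : Fin 2) 1 + e) (homogeneousComponent 4 F) ≠ 0 := by
    rw [hH4, coeff_X_mul]
    exact Finsupp.mem_support_iff.mp hesup
  have hdeg4 : (Finsupp.single (0 : Fin 2) 1 + e).degree = 4 := by
    have h := homogeneousComponent_isHomogeneous 4 F hc4
    change Finsupp.weight (fun _ => 1) _ = 4 at h
    rwa [← Finsupp.degree_eq_weight_one] at h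
  have he1 : e 1 = 3 := by
    rw [deg2, Finsupp.add_apply, Finsupp.add_apply, Finsupp.single_eq_same,
      Finsupp.single_eq_of_ne' (by decide : (0 : Fin 2) ≠ 1)] at hdeg4
    omega
  have heeq : Finsupp.single (0 : Fin 2) 1 + e
      = Finsupp.single (0 : Fin 2) 1 + Finsupp.single (1 : Fin 2) 3 := by
    congr 1
    rw [finsupp_fin2_eq e, he0, he1]
    simp
  set b := F.coeff (Finsupp.single (0 : Fin 2) 1 + Finsupp.single (1 : Fin 2) 3) with hbdef
  set c := F.coeff (Finsupp.single (1 : Fin 2) 3) with hcdef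
  have hb : b ≠ 0 := by
    have h1 : coeff (Finsupp.single (0 : Fin 2) 1 + Finsupp.single (1 : Fin 2) 3)
        (homogeneousComponent 4 F) = b := by
      rw [coeff_homogeneousComponent, if_pos]
      rw [deg2]
      simp [Finsupp.single_apply]
    rw [← h1, ← heeq]
    exact hc4
  -- choose x₀ with c + b * x₀ ≠ 0
  obtain ⟨x₀, hx₀⟩ : ∃ x₀ : ℤ, c + b * x₀ ≠ 0 := by
    rcases eq_or_ne (c + b) 0 with h | h
    · refine ⟨0, ?_⟩
      simp only [mul_zero, add_zero]
      intro h0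
      exact hb (by linarith)
    · exact ⟨1, by simpa using h⟩
  -- the one-variable polynomial y ↦ F(x₀, y)
  set p : Polynomial ℤ := aeval ![Polynomial.C x₀, Polynomial.X] F with hpdef
  have hp : p = ∑ d ∈ F.support,
      Polynomial.C (F.coeff d * x₀ ^ d 0) * Polynomial.X ^ d 1 := by
    rw [hpdef, aeval_def, eval₂_eq']
    refine Finset.sum_congr rfl fun d _ => ?_
    rw [Fin.prod_univ_two]
    simp only [Matrix.cons_val_zero, Matrix.cons_val_one, Matrix.head_cons,
      algebraMap_int_eq, eq_intCast]
    push_cast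
    ring
  have hpc : ∀ k, p.coeff k
      = ∑ d ∈ F.support, F.coeff d * x₀ ^ d 0 * (if k = d 1 then 1 else 0) := by
    intro k
    rw [hp, Polynomial.finset_sum_coeff]
    refine Finset.sum_congr rfl fun d _ => ?_
    rw [Polynomial.coeff_C_mul, Polynomial.coeff_X_pow]
  have hnd : p.natDegree ≤ 3 := by
    rw [Polynomial.natDegree_le_iff_coeff_eq_zero]
    intro m hm
    rw [hpc m]
    refine Finset.sum_eq_zero fun d hd => ?_
    have := (hkey d hd).1
    rw [if_neg (by omega), mul_zero]
  have hc3 : p.coeff 3 = c + b * x₀ := by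
    rw [hpc 3]
    set f : (Fin 2 →₀ ℕ) → ℤ :=
      fun d => F.coeff d * x₀ ^ d 0 * (if 3 = d 1 then 1 else 0) with hf
    set s : Finset (Fin 2 →₀ ℕ) :=
      {Finsupp.single (1 : Fin 2) 3, Finsupp.single (0 : Fin 2) 1 + Finsupp.single (1 : Fin 2) 3}
      with hs
    have hne : (Finsupp.single (1 : Fin 2) 3)
        ≠ Finsupp.single (0 : Fin 2) 1 + Finsupp.single (1 : Fin 2) 3 := by
      intro hh
      have := congrArg (fun f : Fin 2 →₀ ℕ => f 0) hh
      simp [Finsupp.single_apply] at this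
    have h1 : ∑ d ∈ F.support, f d = ∑ d ∈ F.support ∪ s, f d := by
      refine Finset.sum_subset Finset.subset_union_left fun x _ hx => ?_
      rw [hf]
      simp [notMem_support_iff.mp hx]
    have h2 : ∑ d ∈ s, f d = ∑ d ∈ F.support ∪ s, f d := by
      refine Finset.sum_subset Finset.subset_union_right fun x hx hxs => ?_
      rcases Finset.mem_union.mp hx with hx' | hx'
      · rcases eq_or_ne (x 1) 3 with h13 | h13
        · exfalso
          have hk := hkey x hx'
          have hx0 : x 0 ≤ 1 := hk.2 h13
          apply hxs
          rw [hs]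
          rcases Nat.le_one_iff_eq_zero_or_eq_one.mp hx0 with h0 | h0
          · rw [Finset.mem_insert]
            left
            rw [finsupp_fin2_eq x, h0, h13]
            simp
          · rw [Finset.mem_insert]
            right
            rw [Finset.mem_singleton, finsupp_fin2_eq x, h0, h13]
        · rw [hf]
          simp only []
          rw [if_neg (fun hh => h13 hh.symm), mul_zero]
      · exact absurd hx' hxs
    rw [h1, ← h2, hs, Finset.sum_pair hne, hf]
    simp [Finsupp.single_apply, hbdef, hcdef]
  have hpnd : p.natDegree = 3 :=
    le_antisymm hnd (Polynomial.le_natDegree_of_ne_zero (by rw [hc3]; exact hx₀))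
  obtain ⟨y, hy⟩ := aux_eval_lt p hpnd D₂
  have heval : Polynomial.eval y p = eval ![x₀, y] F := by
    have h := MvPolynomial.comp_aeval (f := ![Polynomial.C x₀, Polynomial.X])
      (Polynomial.aeval (R := ℤ) y)
    have h2 := AlgHom.congr_fun h F
    simp only [AlgHom.coe_comp, Function.comp_apply] at h2
    have hfun : (fun i => Polynomial.aeval (R := ℤ) y (![Polynomial.C x₀, Polynomial.X] i))
        = ![x₀, y] := by
      funext i
      fin_cases i <;> simp
    rw [hfun] at h2
    have hL : Polynomial.aeval (R := ℤ) y p = Polynomial.eval y p :=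
      congrFun (Polynomial.coe_aeval_eq_eval y) p
    have hR : MvPolynomial.aeval ![x₀, y] F = eval ![x₀, y] F :=
      RingHom.congr_fun (MvPolynomial.coe_aeval_eq_eval (f := ![x₀, y])) F
    rw [← hL, ← hR]
    exact h2
  have hmem : eval ![x₀, y] F ∈ {m : ℤ | ∃ x y : ℤ, eval ![x, y] F = m} := ⟨x₀, y, rfl⟩
  rw [hset] at hmem
  obtain ⟨n, hn0, hmn⟩ := hmem
  have hge : D₂ ≤ eval ![x₀, y] F := by nlinarith
  rw [← heval] at hge
  omega
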